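/- Suppose a : [0,T]×[0,T] → ℝ satisfies the comparability hypothesis of the previous statement, with a(t,t) = t for all t (normalization lmr(g_t) = t). Define c(t) as the limit of the telescoping sums over partitions of [0,t]. Then c : [0,T] → ℝ is increasing, c(0) = 0, and c is Lipschitz continuous with Lipschitz constant 1: 0 ≤ c(t₂) − c(t₁) ≤ t₂ − t₁ for 0 ≤ t₁ ≤ t₂ ≤ T. -/

import Mathlib

/-- A partition 0 = t₀ < t₁ < ... < t_n = t of [0,t]. -/
structure TelescopePartition (t : ℝ) where
  n : ℕ
  pts : ℕ → ℝ
  mono : ∀ i, i < n → pts i < pts (i + 1)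
  first : pts 0 = 0
  last : pts n = t

/-- The mesh of a partition: the maximal step size. -/
noncomputable def TelescopePartition.mesh {t : ℝ} (P : TelescopePartition t) : ℝ :=
  (Finset.range P.n).fold max 0 fun i => P.pts (i + 1) - P.pts i

/-- The telescoping sum S(a,P) = Σ_l [a(t_{l+1},t_l) − a(t_l,t_l)]. -/
noncomputable def psum {t : ℝ} (a : ℝ → ℝ → ℝ) (P : TelescopePartition t) : ℝ :=
  ∑ i ∈ Finset.range P.n, (a (P.pts (i + 1)) (P.pts i) - a (P.pts i) (P.pts i))

/-!
Each increment `a(y, x) - a(x, x)` with `x < y` lies in `[0, y - x]`: it is nonnegative by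
monotonicity in the first variable, and `a(y, x) ≤ a(y, y) = y` by monotonicity in the second.
A fine partition of `[0, t₁]` extends to a fine partition of `[0, t₂]` by appending points of
`[t₁, t₂]`, which adds to the telescoping sum a quantity in `[0, t₂ - t₁]`; passing to the limit
gives `0 ≤ c t₂ - c t₁ ≤ t₂ - t₁`.
-/

namespace TelescopePartition

def nil : TelescopePartition 0 where
  n := 0
  pts := fun _ => 0
  mono := fun _ h => absurd h (Nat.not_lt_zero _)
  first := rfl
  last := rfl

@[simp]
lemma mesh_nil : nil.mesh = 0 := rfl

@[simp]
lemma psum_nil (a : ℝ → ℝ → ℝ) : psum a nil = 0 := rfl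

variable {s t : ℝ}

lemma mesh_nonneg (P : TelescopePartition s) : 0 ≤ P.mesh :=
  (Finset.le_fold_max _).2 (Or.inl le_rfl)

lemma sub_le_mesh (P : TelescopePartition s) {i : ℕ} (hi : i < P.n) :
    P.pts (i + 1) - P.pts i ≤ P.mesh :=
  (Finset.le_fold_max _).2 (Or.inr ⟨i, Finset.mem_range.2 hi, le_rfl⟩)

def snoc (P : TelescopePartition s) (t : ℝ) (hst : s < t) : TelescopePartition t where
  n := P.n + 1
  pts := fun i => if i ≤ P.n then P.pts i else t
  mono i hi := by
    rcases (Nat.lt_succ_iff.1 hi).lt_or_eq with hi | rfl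
    · simpa [hi.le, Nat.succ_le_of_lt hi] using P.mono i hi
    · simpa [P.last] using hst
  first := by simp [P.first]
  last := by simp

lemma snoc_pts_of_le (P : TelescopePartition s) (hst : s < t) {i : ℕ} (hi : i ≤ P.n) :
    (P.snoc t hst).pts i = P.pts i := if_pos hi

lemma snoc_pts_n_add_one (P : TelescopePartition s) (hst : s < t) :
    (P.snoc t hst).pts (P.n + 1) = t := if_neg (Nat.not_succ_le_self _)

lemma mesh_snoc_le (P : TelescopePartition s) (hst : s < t) :
    (P.snoc t hst).mesh ≤ max P.mesh (t - s) := by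
  refine (Finset.fold_max_le _).2 ⟨le_max_of_le_left P.mesh_nonneg, fun i hi => ?_⟩
  rcases (Nat.lt_succ_iff.1 (Finset.mem_range.1 hi)).lt_or_eq with hi | rfl
  · rw [snoc_pts_of_le P hst hi, snoc_pts_of_le P hst hi.le]
    exact le_max_of_le_left (P.sub_le_mesh hi)
  · rw [snoc_pts_n_add_one, snoc_pts_of_le P hst le_rfl, P.last]
    exact le_max_right _ _

lemma psum_snoc (a : ℝ → ℝ → ℝ) (P : TelescopePartition s) (hst : s < t) :
    psum a (P.snoc t hst) = psum a P + (a t s - a s s) := by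
  have hlast : (P.snoc t hst).pts P.n = s := (snoc_pts_of_le P hst le_rfl).trans P.last
  rw [psum, show (P.snoc t hst).n = P.n + 1 from rfl, Finset.sum_range_succ, snoc_pts_n_add_one,
    hlast, psum]
  congr 1
  refine Finset.sum_congr rfl fun i hi => ?_
  have hi := Finset.mem_range.1 hi
  rw [snoc_pts_of_le P hst hi.le, snoc_pts_of_le P hst hi]

theorem exists_extension {a : ℝ → ℝ → ℝ}
    (hinc : ∀ x y, s ≤ x → x < y → y ≤ t → 0 ≤ a y x - a x x ∧ a y x - a x x ≤ y - x)
    (P : TelescopePartition s) (hst : s ≤ t) {δ : ℝ} (hδ : 0 < δ) :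
    ∃ Q : TelescopePartition t, Q.mesh ≤ max P.mesh δ ∧
      0 ≤ psum a Q - psum a P ∧ psum a Q - psum a P ≤ t - s := by
  obtain ⟨k, hk⟩ : ∃ k : ℕ, t - s ≤ k * δ := by
    obtain ⟨k, hk⟩ := exists_nat_ge ((t - s) / δ)
    exact ⟨k, (div_le_iff₀ hδ).1 hk⟩
  induction k generalizing t with
  | zero =>
    obtain rfl : t = s := le_antisymm (by simpa using hk) hst
    exact ⟨P, le_max_left _ _, by simp⟩
  | succ k ih =>
    rcases hst.eq_or_lt with rfl | hlt
    · exact ⟨P, le_max_left _ _, by simp⟩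
    set t' := max s (t - δ)
    have ht' : t' < t := max_lt hlt (by linarith)
    obtain ⟨Q, hQ, hlo, hhi⟩ := ih (t := t')
      (fun x y hx hxy hy => hinc x y hx hxy (hy.trans ht'.le)) (le_max_left _ _)
      (sub_le_iff_le_add.2 <|
        max_le (le_add_of_nonneg_left (by positivity)) (by push_cast at hk; linarith))
    obtain ⟨hinc₀, hinc₁⟩ := hinc t' t (le_max_left _ _) ht' le_rfl
    refine ⟨Q.snoc t ht', (Q.mesh_snoc_le ht').trans (max_le hQ ?_), ?_⟩
    · exact le_max_of_le_right (by linarith [le_max_right s (t - δ)])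
    · rw [psum_snoc]
      constructor <;> linarith

end TelescopePartition

open TelescopePartition

lemma increment_nonneg_and_le {S : Set ℝ} {a : ℝ → ℝ → ℝ}
    (hmono : ∀ τ ∈ S, MonotoneOn (fun t => a t τ) S)
    (hmono2 : ∀ t ∈ S, MonotoneOn (a t) S)
    (hdiag : ∀ t ∈ S, a t t = t) {x y : ℝ} (hx : x ∈ S) (hy : y ∈ S) (hxy : x ≤ y) :
    0 ≤ a y x - a x x ∧ a y x - a x x ≤ y - x := by
  have h₁ : a x x ≤ a y x := hmono x hx hx hy hxy
  have h₂ : a y x ≤ a y y := hmono2 y hy hx hy hxy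
  rw [hdiag x hx] at h₁ ⊢
  rw [hdiag y hy] at h₂
  constructor <;> linarith

lemma sub_bounds_of_partition_approx {a : ℝ → ℝ → ℝ} {c : ℝ → ℝ} {s t lo hi : ℝ}
    (hs : ∀ ε > 0, ∃ δ > 0, ∀ P : TelescopePartition s, P.mesh < δ → |psum a P - c s| < ε)
    (ht : ∀ ε > 0, ∃ δ > 0, ∀ Q : TelescopePartition t, Q.mesh < δ → |psum a Q - c t| < ε)
    (hPQ : ∀ δ > 0, ∃ (P : TelescopePartition s) (Q : TelescopePartition t),
      P.mesh < δ ∧ Q.mesh < δ ∧ lo ≤ psum a Q - psum a P ∧ psum a Q - psum a P ≤ hi) :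
    lo ≤ c t - c s ∧ c t - c s ≤ hi := by
  have key : ∀ ε > 0, lo < c t - c s + ε ∧ c t - c s < hi + ε := by
    intro ε hε
    obtain ⟨δs, hδs, Hs⟩ := hs (ε / 2) (half_pos hε)
    obtain ⟨δt, hδt, Ht⟩ := ht (ε / 2) (half_pos hε)
    obtain ⟨P, Q, hP, hQ, hlo, hhi⟩ := hPQ (min δs δt) (lt_min hδs hδt)
    have hcs := abs_lt.1 (Hs P (hP.trans_le (min_le_left _ _)))
    have hct := abs_lt.1 (Ht Q (hQ.trans_le (min_le_right _ _)))
    constructor <;> linarith [hcs.1, hcs.2, hct.1, hct.2]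
  exact ⟨le_of_forall_pos_lt_add fun ε hε => (key ε hε).1,
    le_of_forall_pos_lt_add fun ε hε => (key ε hε).2⟩

theorem cumulative_lipschitz_general (T : ℝ) (hT : 0 < T)
    (a : ℝ → ℝ → ℝ) (c : ℝ → ℝ)
    (hmono : ∀ τ ∈ Set.Icc 0 T, StrictMonoOn (fun t => a t τ) (Set.Icc 0 T))
    (hmono2 : ∀ t ∈ Set.Icc 0 T, MonotoneOn (a t) (Set.Icc 0 T))
    (hdiag : ∀ t ∈ Set.Icc 0 T, a t t = t)
    (hc : ∀ t ∈ Set.Icc 0 T, ∀ ε > 0, ∃ δ > 0, ∀ P : TelescopePartition t,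
      P.mesh < δ → |psum a P - c t| < ε) :
    c 0 = 0 ∧ MonotoneOn c (Set.Icc 0 T) ∧
      ∀ t₁ t₂ : ℝ, 0 ≤ t₁ → t₁ ≤ t₂ → t₂ ≤ T →
        0 ≤ c t₂ - c t₁ ∧ c t₂ - c t₁ ≤ t₂ - t₁ := by
  have hc0 : c 0 = 0 := by
    refine eq_of_forall_dist_le fun ε hε => ?_
    obtain ⟨δ, hδ, H⟩ := hc 0 ⟨le_rfl, hT.le⟩ ε hε
    simpa [Real.dist_eq, abs_sub_comm] using (H nil (by simpa using hδ)).le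
  have hlip : ∀ t₁ t₂ : ℝ, 0 ≤ t₁ → t₁ ≤ t₂ → t₂ ≤ T →
      0 ≤ c t₂ - c t₁ ∧ c t₂ - c t₁ ≤ t₂ - t₁ := by
    intro t₁ t₂ h₀ h₁₂ h₂
    have hinc : ∀ x y, 0 ≤ x → x < y → y ≤ t₂ → 0 ≤ a y x - a x x ∧ a y x - a x x ≤ y - x :=
      fun x y hx hxy hy => increment_nonneg_and_le (fun τ hτ => (hmono τ hτ).monotoneOn)
        hmono2 hdiag ⟨hx, by linarith⟩ ⟨by linarith, by linarith⟩ hxy.le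
    refine sub_bounds_of_partition_approx (hc t₁ ⟨h₀, h₁₂.trans h₂⟩) (hc t₂ ⟨h₀.trans h₁₂, h₂⟩)
      fun δ hδ => ?_
    obtain ⟨P, hP, -⟩ := exists_extension (a := a)
      (fun x y hx hxy hy => hinc x y hx hxy (hy.trans h₁₂)) nil h₀ (half_pos hδ)
    obtain ⟨Q, hQ, hPQ⟩ := exists_extension
      (fun x y hx hxy hy => hinc x y (h₀.trans hx) hxy hy) P h₁₂ (half_pos hδ)
    have hPδ : P.mesh < δ := by
      rw [mesh_nil, max_eq_right (half_pos hδ).le] at hP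
      linarith
    exact ⟨P, Q, hPδ, hQ.trans_lt (max_lt hPδ (half_lt_self hδ)), hPQ⟩
  exact ⟨hc0, fun x hx y hy hxy => sub_nonneg.1 (hlip x y hx.1 hxy hy.2).1, hlip⟩

/-- Under the comparability hypothesis, monotonicity in each variable and the
normalization a(t,t) = t, the limit function c of the telescoping sums is increasing,
c(0) = 0, and 1-Lipschitz: 0 ≤ c(t₂) − c(t₁) ≤ t₂ − t₁. -/
theorem cumulative_lipschitz (T : ℝ) (hT : 0 < T)
    (a : ℝ → ℝ → ℝ) (c : ℝ → ℝ)
    (hmono : ∀ τ ∈ Set.Icc 0 T, StrictMonoOn (fun t => a t τ) (Set.Icc 0 T))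
    (hmono2 : ∀ t ∈ Set.Icc 0 T, MonotoneOn (a t) (Set.Icc 0 T))
    (hcomp : ∀ ε > 0, ∃ δ > 0, ∀ s t τ τ' : ℝ, s ∈ Set.Icc 0 T → t ∈ Set.Icc 0 T →
      τ ∈ Set.Icc 0 T → τ' ∈ Set.Icc 0 T → s < t → t - s < δ → |τ - τ'| < δ →
      1 - ε < (a t τ - a s τ) / (a t τ' - a s τ') ∧
        (a t τ - a s τ) / (a t τ' - a s τ') < 1 + ε)
    (hdiag : ∀ t ∈ Set.Icc 0 T, a t t = t)
    (hc : ∀ t ∈ Set.Icc 0 T, ∀ ε > 0, ∃ δ > 0, ∀ P : TelescopePartition t,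
      P.mesh < δ → |psum a P - c t| < ε) :
    c 0 = 0 ∧ MonotoneOn c (Set.Icc 0 T) ∧
      ∀ t₁ t₂ : ℝ, 0 ≤ t₁ → t₁ ≤ t₂ → t₂ ≤ T →
        0 ≤ c t₂ - c t₁ ∧ c t₂ - c t₁ ≤ t₂ - t₁ :=
  cumulative_lipschitz_general T hT a c hmono hmono2 hdiag hc
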